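/- arXiv:1005.1697 — 2 statements merged into one kernel-verified Lean document; each statement's English description precedes it below -/
import Mathlib

section
/- Let m be a positive integer and define I(u) = -(i/m) ∫₀^{2πm} sin(t)/√(1 - u·e^{i t/m}) dt for u in a disc D of radius r₁ < 1 around 0 in ℂ. Then I(u) = π·b_m·u^m, where b_m is the m-th Taylor coefficient at 0 of (1-w)^{-1/2}; in particular I(u) = c·u^m with c ≠ 0. -/
/-! Expand `(1 - w)^{-1/2} = ∑ b_k w^k`, which is Mathlib's binomial series and converges
absolutely for `|w| < 1`, at `w = u e^{it/m}`, and integrate term by term (dominated convergence,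
the terms being bounded by `|b_k| |u|^k`). The `k`-th term contributes
`b_k u^k ∫₀^{2πm} e^{ikt/m} sin t dt`; writing `sin t` through `e^{±it}`, this integral
vanishes unless `k = m`, where it is `π m i`. -/

open Real

/-- The `k`-th Taylor coefficient at `0` of the principal branch of `(1-w)^{-1/2}`. -/
noncomputable def binomCoeffHalf (k : ℕ) : ℂ :=
  (-1) ^ k * (∏ j ∈ Finset.range k, (-(1/2 : ℂ) - (j : ℂ))) / (Nat.factorial k : ℂ)

lemma binomCoeffHalf_eq_choose (k : ℕ) :
    binomCoeffHalf k = Ring.choose ((1/2 : ℂ) + k - 1) k := by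
  have h := Ring.choose_neg (1/2 : ℂ) k
  rw [Ring.choose_eq_smul, ← Polynomial.aeval_eq_smeval, Polynomial.aeval_def,
    Polynomial.eval₂_eq_eval_map, descPochhammer_map, descPochhammer_eval_eq_prod_range,
    smul_eq_mul, Int.negOnePow_def, Units.smul_def] at h
  rw [binomCoeffHalf, mul_div_assoc, div_eq_inv_mul, h]
  simp [← mul_assoc, ← mul_pow]

lemma binomCoeffHalf_ne_zero (k : ℕ) : binomCoeffHalf k ≠ 0 := by
  have hfactor (j : ℕ) : -(1/2 : ℂ) - j ≠ 0 := by
    rw [show -(1/2 : ℂ) - j = -((2 * j + 1 : ℕ) : ℂ) / 2 by push_cast; ring]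
    exact div_ne_zero (neg_ne_zero.2 (Nat.cast_ne_zero.2 (by omega))) two_ne_zero
  exact div_ne_zero (mul_ne_zero (by simp) (Finset.prod_ne_zero_iff.2 fun j _ ↦ hfactor j))
    (Nat.cast_ne_zero.2 k.factorial_ne_zero)

theorem hasFPowerSeriesOnBall_inv_sqrt_one_sub :
    HasFPowerSeriesOnBall (fun w : ℂ ↦ ((1 - w) ^ (1/2 : ℂ))⁻¹)
      (.ofScalars ℂ binomCoeffHalf) 0 1 := by
  simpa only [one_div, funext binomCoeffHalf_eq_choose] using
    Complex.one_div_one_sub_cpow_hasFPowerSeriesOnBall_zero (1/2)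

lemma hasSum_binomCoeffHalf_mul_pow {w : ℂ} (hw : ‖w‖ < 1) :
    HasSum (fun k ↦ binomCoeffHalf k * w ^ k) ((1 - w) ^ (1/2 : ℂ))⁻¹ := by
  have hw' : w ∈ Metric.eball (0 : ℂ) 1 := by
    rw [Metric.mem_eball, edist_zero_right, ← ofReal_norm]
    exact ENNReal.ofReal_lt_one.2 hw
  simpa [FormalMultilinearSeries.ofScalars_apply_eq, mul_comm] using
    hasFPowerSeriesOnBall_inv_sqrt_one_sub.hasSum hw'

lemma summable_norm_binomCoeffHalf_mul_pow {r : ℝ} (hr₀ : 0 ≤ r) (hr : r < 1) :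
    Summable (fun k ↦ ‖binomCoeffHalf k‖ * r ^ k) := by
  lift r to NNReal using hr₀
  simpa using (FormalMultilinearSeries.ofScalars ℂ binomCoeffHalf).summable_norm_mul_pow
    ((ENNReal.coe_lt_one_iff.2 hr).trans_le hasFPowerSeriesOnBall_inv_sqrt_one_sub.r_le)

lemma integral_exp_int_mul_I_div {m : ℕ} (hm : m ≠ 0) (n : ℤ) :
    ∫ t in (0:ℝ)..(2 * π * m), Complex.exp (n * (Complex.I * t / m)) =
      if n = 0 then 2 * π * m else 0 := by
  split_ifs with hn
  · simp [hn]
  have hm' : (m : ℂ) ≠ 0 := Nat.cast_ne_zero.2 hm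
  have hc : (n * Complex.I / m : ℂ) ≠ 0 := by simp [hm', hn, Complex.I_ne_zero]
  have hperiod :
      (n * Complex.I / m : ℂ) * ((2 * π * m : ℝ) : ℂ) = n * (2 * π * Complex.I) := by
    push_cast; field_simp
  simp_rw [show ∀ t : ℝ, (n * (Complex.I * t / m) : ℂ) = (n * Complex.I / m) * t from
    fun t ↦ by ring]
  rw [integral_exp_mul_complex hc, hperiod, Complex.exp_int_mul_two_pi_mul_I]
  simp

lemma integral_exp_pow_mul_sin {m : ℕ} (hm : m ≠ 0) (k : ℕ) :
    ∫ t in (0:ℝ)..(2 * π * m), Complex.exp (Complex.I * t / m) ^ k * Complex.sin t =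
      if k = m then π * m * Complex.I else 0 := by
  have hm' : (m : ℂ) ≠ 0 := Nat.cast_ne_zero.2 hm
  have hsplit (t : ℝ) : Complex.exp (Complex.I * t / m) ^ k * Complex.sin t =
      (Complex.exp (((k - m : ℤ) : ℂ) * (Complex.I * t / m)) -
        Complex.exp (((k + m : ℤ) : ℂ) * (Complex.I * t / m))) * (Complex.I / 2) := by
    have hsub : ((k - m : ℤ) : ℂ) * (Complex.I * t / m) =
        k * (Complex.I * t / m) + -t * Complex.I := by
      push_cast; field_simp; ring
    have hadd : ((k + m : ℤ) : ℂ) * (Complex.I * t / m) =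
        k * (Complex.I * t / m) + t * Complex.I := by
      push_cast; field_simp
    rw [hsub, hadd, Complex.exp_add, Complex.exp_add, Complex.exp_nat_mul, Complex.sin]
    ring
  have hcont (n : ℤ) : IntervalIntegrable
      (fun t : ℝ ↦ Complex.exp (n * (Complex.I * t / m))) MeasureTheory.volume 0 (2 * π * m) :=
    (by fun_prop : Continuous _).intervalIntegrable _ _
  simp_rw [hsplit]
  rw [intervalIntegral.integral_mul_const, intervalIntegral.integral_sub (hcont _) (hcont _),
    integral_exp_int_mul_I_div hm, integral_exp_int_mul_I_div hm]
  split_ifs <;> first | omega | (push_cast; ring)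

lemma norm_exp_I_mul_div (t : ℝ) (m : ℕ) : ‖Complex.exp (Complex.I * t / m)‖ = 1 := by
  rw [show Complex.I * t / m = ((t / m : ℝ) : ℂ) * Complex.I by push_cast; ring,
    Complex.norm_exp_ofReal_mul_I]

lemma norm_sin_ofReal_le_one (t : ℝ) : ‖Complex.sin t‖ ≤ 1 := by
  rw [← Complex.ofReal_sin, Complex.norm_real, Real.norm_eq_abs]
  exact abs_sin_le_one t

lemma integral_sin_div_sqrt_one_sub_mul_exp {m : ℕ} (hm : m ≠ 0) {u : ℂ} (hu : ‖u‖ < 1) :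
    ∫ t in (0:ℝ)..(2 * π * m),
        Complex.sin t / (1 - u * Complex.exp (Complex.I * t / m)) ^ (1/2 : ℂ) =
      binomCoeffHalf m * u ^ m * (π * m * Complex.I) := by
  set e : ℝ → ℂ := fun t ↦ Complex.exp (Complex.I * t / m)
  have hsum_pointwise (t : ℝ) :
      HasSum (fun k ↦ binomCoeffHalf k * u ^ k * (e t ^ k * Complex.sin t))
        (Complex.sin t / (1 - u * e t) ^ (1/2 : ℂ)) := by
    have hw : ‖u * e t‖ < 1 := by rwa [norm_mul, norm_exp_I_mul_div, mul_one]
    simpa [div_eq_mul_inv, mul_pow, mul_comm, mul_left_comm, mul_assoc] using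
      (hasSum_binomCoeffHalf_mul_pow hw).mul_left (Complex.sin t)
  have hsum_integral := intervalIntegral.hasSum_integral_of_dominated_convergence
    (μ := MeasureTheory.volume) (a := 0) (b := 2 * π * m)
    (fun k _ ↦ ‖binomCoeffHalf k‖ * ‖u‖ ^ k) (fun k ↦ by fun_prop)
    (fun k ↦ .of_forall fun t _ ↦ by
      simpa [e, norm_exp_I_mul_div] using
        mul_le_mul_of_nonneg_left (norm_sin_ofReal_le_one t) (by positivity))
    (.of_forall fun t _ ↦ summable_norm_binomCoeffHalf_mul_pow (norm_nonneg u) hu)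
    intervalIntegrable_const (.of_forall fun t _ ↦ hsum_pointwise t)
  simp only [intervalIntegral.integral_const_mul, e, integral_exp_pow_mul_sin hm] at hsum_integral
  rw [hsum_integral.unique (hasSum_single m fun k hk ↦ by simp [hk]), if_pos rfl]

theorem melnikov_integral_eq_general (m : ℕ) (hm : 1 ≤ m) (r₁ : ℝ) (hr₁' : r₁ < 1) :
    ∃ c : ℂ, c = (π : ℂ) * binomCoeffHalf m ∧ c ≠ 0 ∧
      ∀ u : ℂ, ‖u‖ < r₁ →
        -(Complex.I / (m : ℂ)) *
            ∫ t in (0:ℝ)..(2 * π * m),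
              Complex.sin (t : ℂ) /
                ((1 - u * Complex.exp (Complex.I * (t : ℂ) / (m : ℂ))) ^ ((1:ℂ)/2))
          = c * u ^ m := by
  have hm₀ : m ≠ 0 := by omega
  refine ⟨π * binomCoeffHalf m, rfl,
    mul_ne_zero (Complex.ofReal_ne_zero.2 pi_ne_zero) (binomCoeffHalf_ne_zero m), fun u hu ↦ ?_⟩
  rw [integral_sin_div_sqrt_one_sub_mul_exp hm₀ (hu.trans hr₁')]
  field_simp
  rw [Complex.I_sq]
  ring

/-- For a positive integer `m` and `u` in a disc of radius `r₁ < 1` around `0`, the function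
`I(u) = -(i/m) ∫₀^{2πm} sin t / √(1 - u e^{it/m}) dt` equals `π b_m u^m = c u^m` with `c ≠ 0`. -/
theorem melnikov_integral_eq (m : ℕ) (hm : 1 ≤ m) (r₁ : ℝ) (hr₁ : 0 < r₁) (hr₁' : r₁ < 1) :
    ∃ c : ℂ, c = (π : ℂ) * binomCoeffHalf m ∧ c ≠ 0 ∧
      ∀ u : ℂ, ‖u‖ < r₁ →
        -(Complex.I / (m : ℂ)) *
            ∫ t in (0:ℝ)..(2 * π * m),
              Complex.sin (t : ℂ) /
                ((1 - u * Complex.exp (Complex.I * (t : ℂ) / (m : ℂ))) ^ ((1:ℂ)/2))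
          = c * u ^ m :=
  melnikov_integral_eq_general m hm r₁ hr₁'
end

section
/- Let ε ∈ ℂ with |ε - i/m| small enough that μ := min{|e^{2πkε} - 1| : 1 ≤ k ≤ m-1} > 0, and let u₀ ≠ 0 and a ∈ ℂ satisfy |a|·|I_{(k)}(u₀) + a·G_{(k)}(u₀)| < μ for all 1 ≤ k ≤ m-1, where the k-th iterate of P has the form P^k(u) = e^{2πkε}u + a·I_{(k)}(u)·u + a²·G_{(k)}(u)·u. Then P^k(u₀) ≠ u₀ for all 1 ≤ k ≤ m-1; hence if P^m(u₀) = u₀, the orbit u₀, P(u₀), ..., P^{m-1}(u₀) is genuinely periodic of period exactly m. -/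
open Real

theorem add_mul_self_ne_self_of_norm_lt {𝕜 : Type*} [NormedField 𝕜] {c δ u : 𝕜} (hu : u ≠ 0)
    (h : ‖δ‖ < ‖c - 1‖) : c * u + δ * u ≠ u := by
  intro heq
  have hc : c - 1 = -δ := mul_right_cancel₀ hu (by linear_combination heq)
  rw [hc, norm_neg] at h
  exact lt_irrefl _ h

theorem Function.IsPeriodicPt.minimalPeriod_eq_of_forall_lt {α : Type*} {f : α → α} {x : α}
    {n : ℕ} (hn : 0 < n) (hx : Function.IsPeriodicPt f n x)
    (h : ∀ k, 0 < k → k < n → f^[k] x ≠ x) : Function.minimalPeriod f x = n :=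
  le_antisymm (hx.minimalPeriod_le hn) <| not_lt.1 fun hlt =>
    h _ (hx.minimalPeriod_pos hn) hlt Function.iterate_minimalPeriod

theorem orbit_period_exactly_m_general (m : ℕ) (hm : 2 ≤ m) (ε a u₀ : ℂ) (hu₀ : u₀ ≠ 0)
    (μ : ℝ) (I G : ℕ → ℂ) (P : ℂ → ℂ)
    (hμle : ∀ k : ℕ, 1 ≤ k → k ≤ m - 1 →
      μ ≤ ‖Complex.exp (2 * (π : ℂ) * k * ε) - 1‖)
    (hbound : ∀ k : ℕ, 1 ≤ k → k ≤ m - 1 → ‖a‖ * ‖I k + a * G k‖ < μ)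
    (hP : ∀ k : ℕ, 1 ≤ k → k ≤ m - 1 →
      P^[k] u₀ = Complex.exp (2 * (π : ℂ) * k * ε) * u₀ + a * I k * u₀ + a ^ 2 * G k * u₀) :
    (∀ k : ℕ, 1 ≤ k → k ≤ m - 1 → P^[k] u₀ ≠ u₀) ∧
    (P^[m] u₀ = u₀ → Function.minimalPeriod P u₀ = m) := by
  have not_periodic : ∀ k : ℕ, 1 ≤ k → k ≤ m - 1 → P^[k] u₀ ≠ u₀ := by
    intro k hk1 hk2
    have hform : P^[k] u₀ =
        Complex.exp (2 * (π : ℂ) * k * ε) * u₀ + a * (I k + a * G k) * u₀ := by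
      rw [hP k hk1 hk2]; ring
    rw [hform]
    refine add_mul_self_ne_self_of_norm_lt hu₀ ?_
    calc ‖a * (I k + a * G k)‖ = ‖a‖ * ‖I k + a * G k‖ := norm_mul _ _
      _ < μ := hbound k hk1 hk2
      _ ≤ _ := hμle k hk1 hk2
  refine ⟨not_periodic, fun hper => ?_⟩
  exact Function.IsPeriodicPt.minimalPeriod_eq_of_forall_lt (by omega) hper
    fun k hk hkm => not_periodic k hk (Nat.le_sub_one_of_lt hkm)

/-- If `μ ≤ |e^{2πkε} - 1|` and `|a| |I_{(k)}(u₀) + a G_{(k)}(u₀)| < μ` for `1 ≤ k ≤ m-1`,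
where `P^k(u) = e^{2πkε}u + a I_{(k)}(u) u + a² G_{(k)}(u) u`, then `P^k(u₀) ≠ u₀` for
`1 ≤ k ≤ m-1`; hence if `P^m(u₀) = u₀` the orbit of `u₀` is periodic of period exactly `m`. -/
theorem orbit_period_exactly_m (m : ℕ) (hm : 2 ≤ m) (ε a u₀ : ℂ) (hu₀ : u₀ ≠ 0)
    (μ : ℝ) (hμ : 0 < μ) (I G : ℕ → ℂ) (P : ℂ → ℂ)
    (hμle : ∀ k : ℕ, 1 ≤ k → k ≤ m - 1 →
      μ ≤ ‖Complex.exp (2 * (π : ℂ) * k * ε) - 1‖)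
    (hbound : ∀ k : ℕ, 1 ≤ k → k ≤ m - 1 → ‖a‖ * ‖I k + a * G k‖ < μ)
    (hP : ∀ k : ℕ, 1 ≤ k → k ≤ m - 1 →
      P^[k] u₀ = Complex.exp (2 * (π : ℂ) * k * ε) * u₀ + a * I k * u₀ + a ^ 2 * G k * u₀) :
    (∀ k : ℕ, 1 ≤ k → k ≤ m - 1 → P^[k] u₀ ≠ u₀) ∧
    (P^[m] u₀ = u₀ → Function.minimalPeriod P u₀ = m) :=
  orbit_period_exactly_m_general m hm ε a u₀ hu₀ μ I G P hμle hbound hP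
end
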